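/- Let b be a standard Gaussian random vector in ℝ^d and let x, y be unit vectors in ℝ^d. Then the probability that both ⟨b, x⟩ > 0 and ⟨b, y⟩ > 0 equals (π − arccos(⟨x, y⟩)) / (2π). -/

import Mathlib

/-!
The random vector `(⟪b, x⟫, ⟪b, y⟫)` is a centred Gaussian vector in the plane whose law depends
only on the Gram matrix of `x` and `y` (its characteristic function is
`t ↦ exp (-‖t₀ x + t₁ y‖² / 2)`). With `α = arccos ⟪x, y⟫` we may therefore replace `x, y` by the
planar unit vectors `(1, 0)` and `(cos α, sin α)`. In polar coordinates the standard planar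
Gaussian has a rotation-invariant density, so its angle is uniform on `(-π, π)`, and the event
`0 < p₁, 0 < p₁ cos α + p₂ sin α` is exactly the sector of angles `(α - π / 2, π / 2)`, of length
`π - α`.
-/

open MeasureTheory ProbabilityTheory Real Set Filter Topology
open scoped RealInnerProductSpace

section InnerPair

variable {E : Type*} [NormedAddCommGroup E] [InnerProductSpace ℝ E]

noncomputable def innerPair (x y b : E) : EuclideanSpace ℝ (Fin 2) := !₂[⟪b, x⟫, ⟪b, y⟫]

lemma continuous_innerPair (x y : E) : Continuous (innerPair x y) := by
  unfold innerPair
  fun_prop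

lemma inner_innerPair (x y b : E) (t : EuclideanSpace ℝ (Fin 2)) :
    ⟪innerPair x y b, t⟫ = ⟪b, t 0 • x + t 1 • y⟫ := by
  simp [innerPair, inner_add_right, real_inner_smul_right, Fin.sum_univ_two, PiLp.inner_apply]

lemma charFun_map_innerPair [MeasurableSpace E] [BorelSpace E] (μ : Measure E) (x y : E)
    (t : EuclideanSpace ℝ (Fin 2)) :
    charFun (μ.map (innerPair x y)) t = charFun μ (t 0 • x + t 1 • y) := by
  rw [charFun_apply, charFun_apply, integral_map (continuous_innerPair x y).aemeasurable
    (by fun_prop)]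
  simp_rw [inner_innerPair]

variable {F : Type*} [NormedAddCommGroup F] [InnerProductSpace ℝ F]

lemma norm_smul_add_smul_eq_of_gram_eq {x y : E} {x' y' : F} (hx : ‖x‖ = ‖x'‖)
    (hy : ‖y‖ = ‖y'‖) (hxy : ⟪x, y⟫ = ⟪x', y'⟫) (a b : ℝ) :
    ‖a • x + b • y‖ = ‖a • x' + b • y'‖ := by
  rw [← sq_eq_sq₀ (norm_nonneg _) (norm_nonneg _), norm_add_sq_real, norm_add_sq_real,
    norm_smul, norm_smul, norm_smul, norm_smul, real_inner_smul_left, real_inner_smul_right,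
    real_inner_smul_left, real_inner_smul_right, hx, hy, hxy]

lemma map_innerPair_stdGaussian_congr [FiniteDimensional ℝ E] [MeasurableSpace E] [BorelSpace E]
    [FiniteDimensional ℝ F] [MeasurableSpace F] [BorelSpace F] {x y : E} {x' y' : F}
    (hx : ‖x‖ = ‖x'‖) (hy : ‖y‖ = ‖y'‖) (hxy : ⟪x, y⟫ = ⟪x', y'⟫) :
    (stdGaussian E).map (innerPair x y) = (stdGaussian F).map (innerPair x' y') := by
  refine Measure.ext_of_charFun (funext fun t => ?_)
  rw [charFun_map_innerPair, charFun_map_innerPair, charFun_stdGaussian, charFun_stdGaussian,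
    norm_smul_add_smul_eq_of_gram_eq hx hy hxy]

end InnerPair

lemma map_gaussianReal_prod_eq_stdGaussian :
    ((gaussianReal 0 1).prod (gaussianReal 0 1)).map (fun p => !₂[p.1, p.2]) =
      stdGaussian (EuclideanSpace ℝ (Fin 2)) := by
  rw [← map_pi_eq_stdGaussian, ← (measurePreserving_finTwoArrow (gaussianReal 0 1)).map_eq,
    Measure.map_map (by fun_prop) (by fun_prop)]
  congr 1
  funext c
  ext i
  fin_cases i <;> rfl

lemma gaussianReal_prod_eq_withDensity :
    (gaussianReal 0 1).prod (gaussianReal 0 1) =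
      volume.withDensity fun p : ℝ × ℝ =>
        ENNReal.ofReal ((2 * π)⁻¹ * exp (-(p.1 ^ 2 + p.2 ^ 2) / 2)) := by
  rw [gaussianReal_of_var_ne_zero _ one_ne_zero, prod_withDensity (measurable_gaussianPDF 0 1)
    (measurable_gaussianPDF 0 1), ← Measure.volume_eq_prod]
  congr 1
  funext p
  rw [gaussianPDF, gaussianPDF, ← ENNReal.ofReal_mul (gaussianPDFReal_nonneg 0 1 _)]
  congr 1
  simp only [gaussianPDFReal, NNReal.coe_one, mul_one, sub_zero]
  rw [mul_mul_mul_comm, ← exp_add, ← mul_inv, mul_self_sqrt (by positivity)]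
  congr 2
  ring

lemma lintegral_Ioi_mul_exp_neg_sq_div_two :
    ∫⁻ r in Ioi (0 : ℝ), ENNReal.ofReal (r * exp (-r ^ 2 / 2)) = 1 := by
  have hderiv : ∀ r ∈ Ici (0 : ℝ),
      HasDerivAt (fun u => -exp (-u ^ 2 / 2)) (r * exp (-r ^ 2 / 2)) r := fun r _ => by
    refine (((hasDerivAt_pow 2 r).neg.div_const 2).exp.neg).congr_deriv ?_
    simp only [Pi.neg_apply]
    push_cast
    ring
  have hnonneg : ∀ r ∈ Ioi (0 : ℝ), 0 ≤ r * exp (-r ^ 2 / 2) := fun r hr =>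
    mul_nonneg (le_of_lt hr) (exp_pos _).le
  have hlim : Tendsto (fun u : ℝ => -exp (-u ^ 2 / 2)) atTop (𝓝 0) := by
    have := (tendsto_pow_atTop two_ne_zero).atTop_div_const_of_neg (by norm_num : (-2 : ℝ) < 0)
    simpa [div_neg, neg_div] using (tendsto_exp_atBot.comp this).neg
  rw [← ofReal_integral_eq_lintegral_ofReal
      (integrableOn_Ioi_deriv_of_nonneg' hderiv hnonneg hlim)
      ((ae_restrict_iff' measurableSet_Ioi).mpr (ae_of_all _ hnonneg)),
    integral_Ioi_of_hasDerivAt_of_nonneg' hderiv hnonneg hlim]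
  simp

lemma measurable_polarCoord : Measurable (polarCoord : ℝ × ℝ → ℝ × ℝ) := by
  rw [show ⇑polarCoord = fun q : ℝ × ℝ =>
      (√(q.1 ^ 2 + q.2 ^ 2), (Complex.equivRealProd.symm q).arg) from funext polarCoord_apply]
  exact (by fun_prop : Measurable fun q : ℝ × ℝ => √(q.1 ^ 2 + q.2 ^ 2)).prodMk
    (Complex.measurable_arg.comp Complex.equivRealProdCLM.symm.continuous.measurable)

lemma gaussianReal_prod_polarCoord_preimage {s : Set ℝ} (hs : MeasurableSet s)
    (hsπ : s ⊆ Ioo (-π) π) :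
    (gaussianReal 0 1).prod (gaussianReal 0 1) (polarCoord ⁻¹' (Ioi 0 ×ˢ s)) =
      ENNReal.ofReal (2 * π)⁻¹ * volume s := by
  have hR : MeasurableSet (Ioi (0 : ℝ) ×ˢ s) := measurableSet_Ioi.prod hs
  have hdensity : ∀ q ∈ polarCoord.target,
      ENNReal.ofReal q.1 • (polarCoord ⁻¹' (Ioi 0 ×ˢ s)).indicator
        (fun p => ENNReal.ofReal ((2 * π)⁻¹ * exp (-(p.1 ^ 2 + p.2 ^ 2) / 2)))
        (polarCoord.symm q) =
      (Ioi 0 ×ˢ s).indicator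
        (fun q => ENNReal.ofReal (q.1 * exp (-q.1 ^ 2 / 2)) * ENNReal.ofReal (2 * π)⁻¹) q := by
    intro q hq
    have hmem : polarCoord.symm q ∈ polarCoord ⁻¹' (Ioi 0 ×ˢ s) ↔ q ∈ Ioi 0 ×ˢ s := by
      rw [mem_preimage, polarCoord.right_inv hq]
    have hsq : (q.1 * cos q.2) ^ 2 + (q.1 * sin q.2) ^ 2 = q.1 ^ 2 := by
      linear_combination q.1 ^ 2 * cos_sq_add_sin_sq q.2
    by_cases hq' : q ∈ Ioi 0 ×ˢ s
    · rw [indicator_of_mem (hmem.mpr hq'), indicator_of_mem hq', polarCoord_symm_apply,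
        hsq, smul_eq_mul, ← ENNReal.ofReal_mul hq.1.le, ← ENNReal.ofReal_mul]
      · ring_nf
      · exact mul_nonneg hq.1.le (exp_pos _).le
    · rw [indicator_of_notMem (mt hmem.mp hq'), indicator_of_notMem hq', smul_zero]
  rw [gaussianReal_prod_eq_withDensity, withDensity_apply _ (measurable_polarCoord hR),
    ← lintegral_indicator (measurable_polarCoord hR), ← lintegral_comp_polarCoord_symm,
    setLIntegral_congr_fun polarCoord.open_target.measurableSet hdensity,
    setLIntegral_indicator hR, polarCoord_target, inter_eq_left.mpr (prod_mono subset_rfl hsπ),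
    Measure.volume_eq_prod, ← Measure.prod_restrict,
    lintegral_prod_mul (f := fun r => ENNReal.ofReal (r * exp (-r ^ 2 / 2)))
      (g := fun _ => ENNReal.ofReal (2 * π)⁻¹) (by fun_prop) (by fun_prop),
    lintegral_Ioi_mul_exp_neg_sq_div_two, setLIntegral_const, one_mul]

lemma cos_pos_and_cos_sub_pos_iff {θ α : ℝ} (hθ : θ ∈ Ioc (-π) π) (hα : α ∈ Icc 0 π) :
    0 < cos θ ∧ 0 < cos (θ - α) ↔ θ ∈ Ioo (α - π / 2) (π / 2) := by
  obtain ⟨hθ₁, hθ₂⟩ := hθ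
  obtain ⟨hα₁, hα₂⟩ := hα
  constructor
  · rintro ⟨hcos, hcos_sub⟩
    have hlt : θ < π / 2 := by
      by_contra! h
      exact (cos_nonpos_of_pi_div_two_le_of_le h (by linarith)).not_gt hcos
    have hgt : -(π / 2) < θ := by
      by_contra! h
      rw [← cos_neg] at hcos
      exact (cos_nonpos_of_pi_div_two_le_of_le (by linarith) (by linarith)).not_gt hcos
    refine ⟨?_, hlt⟩
    by_contra! h
    rw [← cos_neg] at hcos_sub
    exact (cos_nonpos_of_pi_div_two_le_of_le (by linarith) (by linarith)).not_gt hcos_sub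
  · rintro ⟨h₁, h₂⟩
    exact ⟨cos_pos_of_mem_Ioo ⟨by linarith, h₂⟩, cos_pos_of_mem_Ioo ⟨by linarith, by linarith⟩⟩

lemma setOf_pos_and_pos_eq_polarCoord_preimage {α : ℝ} (hα : α ∈ Icc 0 π) :
    {p : ℝ × ℝ | 0 < p.1 ∧ 0 < cos α * p.1 + sin α * p.2} =
      polarCoord ⁻¹' (Ioi 0 ×ˢ Ioo (α - π / 2) (π / 2)) := by
  ext p
  set z := Complex.equivRealProd.symm p
  have hre : ‖z‖ * cos z.arg = p.1 := Complex.norm_mul_cos_arg z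
  have him : ‖z‖ * sin z.arg = p.2 := Complex.norm_mul_sin_arg z
  have hpolar : polarCoord p = (‖z‖, z.arg) := by
    rw [polarCoord_apply, Complex.norm_def, Complex.normSq_apply]
    simp [z, sq]
  have hrot : cos α * p.1 + sin α * p.2 = ‖z‖ * cos (z.arg - α) := by
    rw [← hre, ← him, cos_sub]
    ring
  simp only [mem_ofPred_eq, mem_preimage, hpolar, mem_prod, mem_Ioi]
  rw [hrot, ← hre, ← cos_pos_and_cos_sub_pos_iff ⟨Complex.neg_pi_lt_arg z, Complex.arg_le_pi z⟩ hα]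
  constructor
  · rintro ⟨h₁, h₂⟩
    have hr : 0 < ‖z‖ := norm_pos_iff.mpr fun hz => by simp [hz] at h₁
    exact ⟨hr, pos_of_mul_pos_right h₁ hr.le, pos_of_mul_pos_right h₂ hr.le⟩
  · rintro ⟨hr, h₁, h₂⟩
    exact ⟨mul_pos hr h₁, mul_pos hr h₂⟩

theorem stdGaussian_inner_pos_and_inner_pos {E : Type*} [NormedAddCommGroup E]
    [InnerProductSpace ℝ E] [FiniteDimensional ℝ E] [MeasurableSpace E] [BorelSpace E]
    {x y : E} (hx : ‖x‖ = 1) (hy : ‖y‖ = 1) :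
    stdGaussian E {b | 0 < ⟪b, x⟫ ∧ 0 < ⟪b, y⟫} =
      ENNReal.ofReal ((π - arccos ⟪x, y⟫) / (2 * π)) := by
  set α := arccos ⟪x, y⟫
  have hα : α ∈ Icc 0 π := ⟨arccos_nonneg _, arccos_le_pi _⟩
  have hcos : cos α = ⟪x, y⟫ := cos_arccos (neg_one_le_real_inner_of_norm_eq_one hx hy)
    (real_inner_le_one_of_norm_eq_one hx hy)
  set x₀ : EuclideanSpace ℝ (Fin 2) := !₂[1, 0]
  set y₀ : EuclideanSpace ℝ (Fin 2) := !₂[cos α, sin α]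
  have hx₀ : ‖x₀‖ = 1 := by simp [x₀, EuclideanSpace.norm_eq]
  have hy₀ : ‖y₀‖ = 1 := by simp [y₀, EuclideanSpace.norm_eq]
  have hxy₀ : ⟪x₀, y₀⟫ = cos α := by simp [x₀, y₀, PiLp.inner_apply]
  have hQ : MeasurableSet {u : EuclideanSpace ℝ (Fin 2) | 0 < u 0 ∧ 0 < u 1} := by
    measurability
  calc stdGaussian E {b | 0 < ⟪b, x⟫ ∧ 0 < ⟪b, y⟫}
      = (stdGaussian E).map (innerPair x y) {u | 0 < u 0 ∧ 0 < u 1} :=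
        (Measure.map_apply (continuous_innerPair x y).measurable hQ).symm
    _ = (stdGaussian (EuclideanSpace ℝ (Fin 2))).map (innerPair x₀ y₀)
          {u | 0 < u 0 ∧ 0 < u 1} := by
        rw [map_innerPair_stdGaussian_congr (hx.trans hx₀.symm) (hy.trans hy₀.symm)
          (hxy₀.trans hcos).symm]
    _ = (gaussianReal 0 1).prod (gaussianReal 0 1)
          {p | 0 < p.1 ∧ 0 < cos α * p.1 + sin α * p.2} := by
        rw [← map_gaussianReal_prod_eq_stdGaussian, Measure.map_map
          (continuous_innerPair x₀ y₀).measurable (by fun_prop),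
          Measure.map_apply ((continuous_innerPair x₀ y₀).measurable.comp (by fun_prop)) hQ]
        congr 1
        ext p
        simp [innerPair, x₀, y₀, PiLp.inner_apply, mul_comm]
    _ = ENNReal.ofReal (2 * π)⁻¹ * volume (Ioo (α - π / 2) (π / 2)) := by
        rw [setOf_pos_and_pos_eq_polarCoord_preimage hα, gaussianReal_prod_polarCoord_preimage
          measurableSet_Ioo (Ioo_subset_Ioo (by linarith [hα.1, pi_pos]) (by linarith [pi_pos]))]
    _ = ENNReal.ofReal ((π - α) / (2 * π)) := by
        rw [volume_Ioo, ← ENNReal.ofReal_mul (by positivity)]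
        ring_nf

theorem stmt_5 (d : ℕ) (x y : Fin d → ℝ)
    (hx : ∑ i, x i ^ 2 = 1) (hy : ∑ i, y i ^ 2 = 1) :
    (Measure.pi fun _ : Fin d => gaussianReal 0 1)
      {b : Fin d → ℝ | 0 < ∑ i, b i * x i ∧ 0 < ∑ i, b i * y i} =
    ENNReal.ofReal ((Real.pi - Real.arccos (∑ i, x i * y i)) / (2 * Real.pi)) := by
  have hinner : ∀ u v : Fin d → ℝ, ⟪WithLp.toLp 2 u, WithLp.toLp 2 v⟫ = ∑ i, u i * v i :=
    fun u v => by simp [PiLp.inner_apply, mul_comm]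
  have hnorm : ∀ u : Fin d → ℝ, ∑ i, u i ^ 2 = 1 → ‖WithLp.toLp 2 u‖ = 1 := fun u hu => by
    rw [EuclideanSpace.norm_eq]
    simp [hu]
  have hmeas : MeasurableSet {b : EuclideanSpace ℝ (Fin d) |
      0 < ⟪b, WithLp.toLp 2 x⟫ ∧ 0 < ⟪b, WithLp.toLp 2 y⟫} := by
    measurability
  have key := stdGaussian_inner_pos_and_inner_pos (hnorm x hx) (hnorm y hy)
  rw [← map_pi_eq_stdGaussian, Measure.map_apply (by fun_prop) hmeas, hinner] at key
  simpa only [preimage_ofPred_eq, hinner] using key
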